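/- For all positive integers m and n, the set B = {(i,j) ∈ V(HD(m,n)) : i + j = m − 1} ∪ {(i,j) ∈ V(HD(m,n)) : j = i + m} is a 1-leaky forcing set of the Hopi rectangle graph HD(m,n); consequently the 1-leaky forcing number of HD(m,n) is at most m + n, i.e., Z_{(1)}(HD(m,n)) ≤ m + n. -/

import Mathlib

/-- One round of the zero forcing color change rule, where vertices in the
leak set `L` are not permitted to force. A blue vertex `u ∉ L` with exactly one
non-blue neighbor `v` turns `v` blue. -/
def zfStep {V : Type*} (G : SimpleGraph V) (L : Set V) (B : Set V) : Set V :=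
  B ∪ {v | ∃ u ∈ B, u ∉ L ∧ G.Adj u v ∧ ∀ w, G.Adj u w → w ∉ B → w = v}

/-- The set of vertices eventually colored blue starting from `B`, with leaks `L`. -/
def zfClosure {V : Type*} (G : SimpleGraph V) (L : Set V) (B : Set V) : Set V :=
  ⋃ k, (zfStep G L)^[k] B

/-- `B` is an `ℓ`-leaky forcing set: for every leak set of size at most `ℓ`,
starting with exactly `B` blue, eventually every vertex becomes blue. -/
def IsLeakyForcingSet {V : Type*} (G : SimpleGraph V) (ℓ : ℕ) (B : Set V) : Prop :=
  ∀ L : Set V, L.ncard ≤ ℓ → zfClosure G L B = Set.univ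

/-- `B` is a zero forcing set (no leaks). -/
def IsZeroForcingSet {V : Type*} (G : SimpleGraph V) (B : Set V) : Prop :=
  zfClosure G (∅ : Set V) B = Set.univ

/-- The zero forcing number `Z(G)`: minimum cardinality of a zero forcing set. -/
noncomputable def zfNumber {V : Type*} (G : SimpleGraph V) : ℕ :=
  sInf (Set.ncard '' {B : Set V | IsZeroForcingSet G B})

/-- The `ℓ`-leaky forcing number `Z_(ℓ)(G)`: minimum cardinality of an
`ℓ`-leaky forcing set. -/
noncomputable def leakyNumber {V : Type*} (G : SimpleGraph V) (ℓ : ℕ) : ℕ :=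
  sInf (Set.ncard '' {B : Set V | IsLeakyForcingSet G ℓ B})

/-- The vertex set of the Hopi rectangle graph of order `(m,n)`: the set of
integer lattice points `(i,j)` with `m-1 ≤ i+j ≤ 2n+m-1` and `|i-j| ≤ m`
(realized as a `Finset` by filtering a sufficiently large box). -/
noncomputable def HDverts (m n : ℕ) : Finset (ℤ × ℤ) :=
  (Finset.Icc (-2 : ℤ) (2*n + 2*m) ×ˢ Finset.Icc (-2 : ℤ) (2*n + 2*m)).filter
    (fun p => (m : ℤ) - 1 ≤ p.1 + p.2 ∧ p.1 + p.2 ≤ 2*n + m - 1 ∧ |p.1 - p.2| ≤ m)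

/-- The Hopi rectangle graph `HD(m,n)`: vertices are the points of `HDverts m n`,
and `(i,j)` is adjacent to `(i',j')` iff `|i - i'| + |j - j'| = 1`. -/
def HD (m n : ℕ) : SimpleGraph {p : ℤ × ℤ // p ∈ HDverts m n} where
  Adj u v := |u.val.1 - v.val.1| + |u.val.2 - v.val.2| = 1
  symm := by
    constructor
    intro u v h
    rw [abs_sub_comm v.val.1 u.val.1, abs_sub_comm v.val.2 u.val.2]
    exact h
  loopless := by constructor; intro u h; simp at h

/-- The set `B = {(i,j) : i + j = m - 1} ∪ {(i,j) : j = i + m}` of vertices of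
`HD(m,n)`. -/
def HDB (m n : ℕ) : Set {p : ℤ × ℤ // p ∈ HDverts m n} :=
  {v | v.val.1 + v.val.2 = (m : ℤ) - 1} ∪ {v | v.val.2 = v.val.1 + (m : ℤ)}

/-!
Blue spreads from `B` column by column, left to right: a vertex outside `B` is forced by its
left neighbour, whose other neighbours lie further left. A single leak `ℓ` can only stop this
sweep inside the open cone to the right of `ℓ`. The vertex right of `ℓ` is recovered by a
zigzag chain running diagonally from it to the boundary of `HD(m,n)` (down to the side
`i - j = m` or up to the side `i + j = 2n + m - 1`, whichever has the right parity), forced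
from its far end back; after that the sweep covers everything. Finally `B` consists of `m`
points on the line `i + j = m - 1` and `n` points on the line `j = i + m`.
-/

section ZeroForcing

variable {V : Type*} (G : SimpleGraph V) (L B : Set V)

theorem monotone_iterate_zfStep : Monotone fun k => (zfStep G L)^[k] B :=
  monotone_nat_of_le_succ fun k => by
    rw [Function.iterate_succ_apply']
    exact Set.subset_union_left

theorem subset_zfClosure : B ⊆ zfClosure G L B :=
  Set.subset_iUnion (fun k => (zfStep G L)^[k] B) 0

theorem zfStep_zfClosure [Finite V] : zfStep G L (zfClosure G L B) = zfClosure G L B := by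
  obtain ⟨K, hK⟩ := WellFoundedGT.monotone_chain_condition ⟨_, monotone_iterate_zfStep G L B⟩
  have hclosure : zfClosure G L B = (zfStep G L)^[K] B := by
    refine (Set.iUnion_subset fun k => ?_).antisymm
      (Set.subset_iUnion (fun k => (zfStep G L)^[k] B) K)
    rcases le_total k K with hk | hk
    · exact monotone_iterate_zfStep G L B hk
    · exact (hK k hk).ge
  rw [hclosure, ← Function.iterate_succ_apply' (zfStep G L)]
  exact (hK (K + 1) K.le_succ).symm

variable {G L B}

theorem mem_zfClosure_of_force [Finite V] {u v : V} (hu : u ∈ zfClosure G L B) (huL : u ∉ L)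
    (hadj : G.Adj u v) (hothers : ∀ w, G.Adj u w → w ≠ v → w ∈ zfClosure G L B) :
    v ∈ zfClosure G L B := by
  rw [← zfStep_zfClosure]
  exact Or.inr ⟨u, hu, huL, hadj, fun w huw hw => by_contra fun hwv => hw (hothers w huw hwv)⟩

end ZeroForcing

abbrev HDVertex (m n : ℕ) : Type := {p : ℤ × ℤ // p ∈ HDverts m n}

theorem mem_HDverts {m n : ℕ} {p : ℤ × ℤ} :
    p ∈ HDverts m n ↔ (m : ℤ) - 1 ≤ p.1 + p.2 ∧ p.1 + p.2 ≤ 2 * n + m - 1 ∧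
      -(m : ℤ) ≤ p.1 - p.2 ∧ p.1 - p.2 ≤ m := by
  simp only [HDverts, Finset.mem_filter, Finset.mem_product, Finset.mem_Icc, abs_le]
  constructor
  · rintro ⟨-, h⟩
    exact h
  · rintro ⟨h1, h2, h3, h4⟩
    exact ⟨⟨⟨by omega, by omega⟩, by omega, by omega⟩, h1, h2, h3, h4⟩

/-- The vertices that a leak at `p` can keep from turning blue during the left-to-right sweep. -/
def leakShadow (p : ℤ × ℤ) : Set (ℤ × ℤ) :=
  {q | |q.2 - p.2| < q.1 - p.1}

theorem mem_leakShadow {p q : ℤ × ℤ} :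
    q ∈ leakShadow p ↔ p.1 - q.1 < q.2 - p.2 ∧ q.2 - p.2 < q.1 - p.1 := by
  show |q.2 - p.2| < q.1 - p.1 ↔ _
  rw [abs_lt, neg_sub]

namespace HD

variable {m n : ℕ}

theorem adj_iff {u v : HDVertex m n} :
    (HD m n).Adj u v ↔
      (v.1.1 = u.1.1 + 1 ∧ v.1.2 = u.1.2) ∨ (v.1.1 = u.1.1 - 1 ∧ v.1.2 = u.1.2) ∨
        (v.1.1 = u.1.1 ∧ v.1.2 = u.1.2 + 1) ∨ (v.1.1 = u.1.1 ∧ v.1.2 = u.1.2 - 1) := by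
  change |_| + |_| = 1 ↔ _
  rcases abs_cases (u.1.1 - v.1.1) with ⟨h1, h1'⟩ | ⟨h1, h1'⟩ <;>
    rcases abs_cases (u.1.2 - v.1.2) with ⟨h2, h2'⟩ | ⟨h2, h2'⟩ <;> omega

theorem vertex_ne_iff {v w : HDVertex m n} : w ≠ v ↔ ¬(w.1.1 = v.1.1 ∧ w.1.2 = v.1.2) := by
  rw [Ne, Subtype.ext_iff, Prod.ext_iff]

theorem column_induction {P : HDVertex m n → Prop}
    (h : ∀ v, (∀ w : HDVertex m n, w.1.1 < v.1.1 → P w) → P v) (v : HDVertex m n) : P v :=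
  (measure fun v : HDVertex m n => v.1.1.toNat).wf.induction v fun v ih =>
    h v fun w hwv => ih w <| by
      have := mem_HDverts.1 w.2
      show w.1.1.toNat < v.1.1.toNat
      omega

/-- The other neighbours of the left neighbour of `v` are the vertices left of `v` within
`ℓ¹`-distance `2`. -/
theorem mem_zfClosure_of_left {L : Set (HDVertex m n)} {v : HDVertex m n} (hvB : v ∉ HDB m n)
    (hleak : ∀ l ∈ L, l.1 ≠ (v.1.1 - 1, v.1.2))
    (hnear : ∀ w : HDVertex m n, w.1.1 < v.1.1 → v.1.1 - w.1.1 + |w.1.2 - v.1.2| ≤ 2 →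
      w ∈ zfClosure (HD m n) L (HDB m n)) :
    v ∈ zfClosure (HD m n) L (HDB m n) := by
  have hv := mem_HDverts.1 v.2
  have hvB' : v.1.1 + v.1.2 ≠ m - 1 ∧ v.1.2 ≠ v.1.1 + m := not_or.1 hvB
  obtain ⟨u, hu⟩ : ∃ u : HDVertex m n, u.1 = (v.1.1 - 1, v.1.2) :=
    ⟨⟨_, mem_HDverts.2 (by omega)⟩, rfl⟩
  obtain ⟨hu1, hu2⟩ := Prod.ext_iff.1 hu
  dsimp only at hu1 hu2
  refine mem_zfClosure_of_force (u := u) (hnear u (by omega) (by simp [hu1, hu2])) ?_ ?_ ?_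
  · exact fun huL => hleak u huL hu
  · exact adj_iff.2 (Or.inl ⟨by omega, by omega⟩)
  · intro w huw hwv
    rw [adj_iff] at huw
    rw [vertex_ne_iff] at hwv
    refine hnear w (by omega) ?_
    rcases abs_cases (w.1.2 - v.1.2) with ⟨h, h'⟩ | ⟨h, h'⟩ <;> omega

theorem mem_zfClosure_of_not_mem_leakShadow {l : HDVertex m n} (v : HDVertex m n)
    (hv : v.1 ∉ leakShadow l.1) : v ∈ zfClosure (HD m n) {l} (HDB m n) := by
  induction v using column_induction with
  | h v ih =>
    by_cases hvB : v ∈ HDB m n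
    · exact subset_zfClosure _ _ _ hvB
    rw [mem_leakShadow] at hv
    refine mem_zfClosure_of_left hvB ?_ fun w hwv hdist => ih w hwv ?_
    · rintro _ rfl hl
      rw [hl] at hv
      simp at hv
    · rw [mem_leakShadow]
      rcases abs_cases (w.1.2 - v.1.2) with ⟨h, h'⟩ | ⟨h, h'⟩ <;> omega

theorem zfClosure_eq_univ {L : Set (HDVertex m n)}
    (hright : ∀ l ∈ L, ∀ v : HDVertex m n, v.1 = (l.1.1 + 1, l.1.2) →
      v ∈ zfClosure (HD m n) L (HDB m n)) :
    zfClosure (HD m n) L (HDB m n) = Set.univ := by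
  refine Set.eq_univ_of_forall fun v => ?_
  induction v using column_induction with
  | h v ih =>
    by_cases hvB : v ∈ HDB m n
    · exact subset_zfClosure _ _ _ hvB
    by_cases hleak : ∃ l ∈ L, l.1 = (v.1.1 - 1, v.1.2)
    · obtain ⟨l, hl, hlv⟩ := hleak
      exact hright l hl v (by simp [hlv])
    push Not at hleak
    exact mem_zfClosure_of_left hvB hleak fun w hwv _ => ih w hwv

/-- The chain `p t = (a + 1 + t, b + s t)` issuing from the right neighbour of the leak
`l = (a, b)`: each `p t` is forced from `(a + 1 + t, b + s (t + 1))`, which lies outside the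
shadow of `l` and whose other neighbours are outside the shadow or equal to `p (t + 1)`. -/
theorem mem_zfClosure_of_chain {l : HDVertex m n} {s : ℤ} (hs : s = 1 ∨ s = -1)
    (hchain : ∀ t : ℕ, (l.1.1 + 1 + t, l.1.2 + s * t) ∈ HDverts m n →
      (l.1.1 + 1 + t, l.1.2 + s * (t + 1)) ∈ HDverts m n)
    (t : ℕ) (v : HDVertex m n) (hv : v.1 = (l.1.1 + 1 + t, l.1.2 + s * t)) :
    v ∈ zfClosure (HD m n) {l} (HDB m n) := by
  have hl := mem_HDverts.1 l.2
  suffices ∀ k t : ℕ, m + n ≤ t + k → ∀ v : HDVertex m n,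
      v.1 = (l.1.1 + 1 + t, l.1.2 + s * t) → v ∈ zfClosure (HD m n) {l} (HDB m n) from
    this (m + n) t (by omega) v hv
  intro k
  induction k with
  | zero =>
    intro t ht v hv
    have := mem_HDverts.1 v.2
    have hv1 := congrArg Prod.fst hv
    dsimp only at hv1
    omega
  | succ k ih =>
    intro t ht v hv
    obtain ⟨hv1, hv2⟩ := Prod.ext_iff.1 hv
    dsimp only at hv1 hv2
    obtain ⟨u, hu⟩ : ∃ u : HDVertex m n, u.1 = (l.1.1 + 1 + t, l.1.2 + s * (t + 1)) :=
      ⟨⟨_, hchain t (hv ▸ v.2)⟩, rfl⟩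
    obtain ⟨hu1, hu2⟩ := Prod.ext_iff.1 hu
    dsimp only at hu1 hu2
    refine mem_zfClosure_of_force (u := u) (mem_zfClosure_of_not_mem_leakShadow u ?_) ?_ ?_ ?_
    · rw [mem_leakShadow]
      rcases hs with rfl | rfl <;> omega
    · rintro rfl
      omega
    · rw [adj_iff]
      rcases hs with rfl | rfl <;> omega
    · intro w huw hwv
      rw [adj_iff] at huw
      rw [vertex_ne_iff] at hwv
      by_cases hnext : w.1 = (l.1.1 + 1 + ↑(t + 1), l.1.2 + s * ↑(t + 1))
      · exact ih (t + 1) (by omega) w hnext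
      · refine mem_zfClosure_of_not_mem_leakShadow w ?_
        rw [mem_leakShadow]
        rw [Prod.ext_iff] at hnext
        dsimp only at hnext
        rcases hs with rfl | rfl <;> push_cast at hnext <;> omega

theorem exists_chain_direction (l : HDVertex m n) :
    ∃ s : ℤ, (s = 1 ∨ s = -1) ∧ ∀ t : ℕ, (l.1.1 + 1 + t, l.1.2 + s * t) ∈ HDverts m n →
      (l.1.1 + 1 + t, l.1.2 + s * (t + 1)) ∈ HDverts m n := by
  have hl := mem_HDverts.1 l.2
  rcases Int.emod_two_eq_zero_or_one (m - l.1.1 + l.1.2) with h | h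
  · refine ⟨-1, Or.inr rfl, fun t ht => ?_⟩
    rw [mem_HDverts] at ht ⊢
    dsimp only at ht ⊢
    omega
  · refine ⟨1, Or.inl rfl, fun t ht => ?_⟩
    rw [mem_HDverts] at ht ⊢
    dsimp only at ht ⊢
    omega

theorem right_of_leak_mem_zfClosure (l v : HDVertex m n) (hv : v.1 = (l.1.1 + 1, l.1.2)) :
    v ∈ zfClosure (HD m n) {l} (HDB m n) := by
  obtain ⟨s, hs, hchain⟩ := exists_chain_direction l
  exact mem_zfClosure_of_chain hs hchain 0 v (by simpa using hv)

end HD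

theorem HDB_isLeakyForcingSet (m n : ℕ) : IsLeakyForcingSet (HD m n) 1 (HDB m n) := by
  intro L hL
  rcases (Set.ncard_le_one_iff_eq (Set.toFinite L)).1 hL with rfl | ⟨l, rfl⟩
  · exact HD.zfClosure_eq_univ (by simp)
  · refine HD.zfClosure_eq_univ fun l' hl' => ?_
    rw [Set.mem_singleton_iff.1 hl']
    exact HD.right_of_leak_mem_zfClosure l

theorem HDB_ncard_le (m n : ℕ) : (HDB m n).ncard ≤ m + n := by
  calc (HDB m n).ncard ≤ (Finset.range (m + n) : Set ℕ).ncard := by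
        refine Set.ncard_le_ncard_of_injOn
          (fun v => if v.1.1 + v.1.2 = m - 1 then v.1.1.toNat else m + v.1.1.toNat) ?_ ?_
        · intro v hv
          have := mem_HDverts.1 v.2
          simp only [Finset.coe_range, Set.mem_Iio]
          rcases hv with (hv : v.1.1 + v.1.2 = m - 1) | (hv : v.1.2 = v.1.1 + m) <;>
            split_ifs <;> omega
        · intro v hv w hw hvw
          have := mem_HDverts.1 v.2
          have := mem_HDverts.1 w.2
          simp only at hvw
          refine Subtype.ext (Prod.ext ?_ ?_) <;>
            rcases hv with (hv : v.1.1 + v.1.2 = m - 1) | (hv : v.1.2 = v.1.1 + m) <;>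
            rcases hw with (hw : w.1.1 + w.1.2 = m - 1) | (hw : w.1.2 = w.1.1 + m) <;>
            split_ifs at hvw <;> omega
    _ = m + n := by rw [Set.ncard_coe_finset, Finset.card_range]

theorem HDB_is_one_leaky_forcing_general (m n : ℕ) :
    IsLeakyForcingSet (HD m n) 1 (HDB m n) ∧ leakyNumber (HD m n) 1 ≤ m + n :=
  ⟨HDB_isLeakyForcingSet m n,
    (Nat.sInf_le (Set.mem_image_of_mem _ (HDB_isLeakyForcingSet m n))).trans (HDB_ncard_le m n)⟩

/-- The set `B = {(i,j) : i + j = m - 1} ∪ {(i,j) : j = i + m}` is a `1`-leaky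
forcing set of `HD(m,n)`; consequently `Z_(1)(HD(m,n)) ≤ m + n`. -/
theorem HDB_is_one_leaky_forcing (m n : ℕ) (hm : 0 < m) (hn : 0 < n) :
    IsLeakyForcingSet (HD m n) 1 (HDB m n) ∧ leakyNumber (HD m n) 1 ≤ m + n :=
  HDB_is_one_leaky_forcing_general m n
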